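/- Let d ≥ 1, ε > 0, and let q₁, …, q_N be pairwise distinct points in ℝ^d. Then the N × N matrix A with entries A_{ij} = (1 + ε²‖q_i − q_j‖²)^{−1/2} (the Gram matrix of the inverse multiquadric radial basis function) is symmetric and positive definite; in particular, A is invertible. -/

import Mathlib

/-!
Gaussian kernel matrices `[exp (-c‖qᵢ - qⱼ‖²)]`, `c ≥ 0`, are positive semidefinite: writing
`‖a - b‖² = ‖a‖² - 2⟪a, b⟫ + ‖b‖²` makes such a matrix the Hadamard product of a rank-one matrix
with the entrywise exponential of a Gram matrix, and the entrywise exponential of a PSD matrix is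
PSD by the Schur product theorem applied to its power series. Since
`(1 + s)^(-1/2) = π^(-1/2) ∫ exp (-(1 + s) u²) du`, the inverse multiquadric matrix is the mixture
`π^(-1/2) ∫ exp (-u²) G(ε²u²) du` of Gaussian kernel matrices. For `x ≠ 0` the integrand
`u ↦ exp (-u²) xᵀ G(ε²u²) x` is continuous and nonnegative, and it is positive for large `u`
because `G(c) → 1` as `c → ∞` when the nodes are distinct; hence the integral is positive.
-/

open Matrix Real MeasureTheory Filter Topology
open scoped Nat ComplexOrder

namespace Matrix

variable {ι : Type*} [Fintype ι]

theorem PosSemidef.map_pow {𝕜 : Type*} [RCLike 𝕜] {A : Matrix ι ι 𝕜} (hA : A.PosSemidef)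
    (n : ℕ) : (A.map (· ^ n)).PosSemidef := by
  induction n with
  | zero =>
    have hones : A.map (· ^ 0) = vecMulVec 1 (star 1) := by ext; simp [vecMulVec]
    exact hones ▸ posSemidef_vecMulVec_self_star 1
  | succ n ih =>
    have hsucc : A.map (· ^ (n + 1)) = A.map (· ^ n) ⊙ A := by ext; simp [pow_succ]
    exact hsucc ▸ ih.hadamard hA

theorem dotProduct_mulVec_eq_sum {R : Type*} [NonUnitalSemiring R] (x y : ι → R)
    (M : Matrix ι ι R) : x ⬝ᵥ M *ᵥ y = ∑ i, ∑ j, x i * M i j * y j := by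
  simp only [dotProduct, mulVec, Finset.mul_sum, mul_assoc]

theorem PosSemidef.map_exp {A : Matrix ι ι ℝ} (hA : A.PosSemidef) :
    (A.map exp).PosSemidef := by
  rw [posSemidef_iff_dotProduct_mulVec]
  refine ⟨hA.isHermitian.map _ fun _ => rfl, fun x => ?_⟩
  have hexp (a : ℝ) : HasSum (fun n : ℕ => (n ! : ℝ)⁻¹ * a ^ n) (exp a) := by
    simpa only [exp_eq_exp_ℝ, div_eq_inv_mul] using NormedSpace.expSeries_div_hasSum_exp a
  have hsum : HasSum (fun n : ℕ => star x ⬝ᵥ ((n ! : ℝ)⁻¹ • A.map (· ^ n)) *ᵥ x)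
      (star x ⬝ᵥ A.map exp *ᵥ x) := by
    simp only [dotProduct_mulVec_eq_sum, smul_apply, map_apply, smul_eq_mul]
    exact hasSum_sum fun i _ => hasSum_sum fun j _ =>
      ((hexp (A i j)).mul_left (star x i)).mul_right (x j)
  exact hsum.nonneg fun n =>
    ((hA.map_pow n).smul (by positivity)).dotProduct_mulVec_nonneg x

theorem posDef_integral {X : Type*} [TopologicalSpace X] [MeasurableSpace X] {μ : Measure X}
    [μ.IsOpenPosMeasure] {F : X → Matrix ι ι ℝ} (hF : Continuous F)
    (hint : ∀ i j, Integrable (fun u => F u i j) μ) (hpsd : ∀ u, (F u).PosSemidef)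
    (hpos : ∀ x ≠ 0, ∃ u, 0 < x ⬝ᵥ F u *ᵥ x) :
    (of fun i j => ∫ u, F u i j ∂μ).PosDef := by
  rw [posDef_iff_dotProduct_mulVec]
  refine ⟨?_, fun x hx => ?_⟩
  · ext i j
    exact integral_congr_ae (.of_forall fun u => (hpsd u).isHermitian.apply i j)
  set Q : X → ℝ := fun u => x ⬝ᵥ F u *ᵥ x
  have hQint : Integrable Q μ := by
    simp only [Q, dotProduct_mulVec_eq_sum]
    exact integrable_finsetSum _ fun i _ => integrable_finsetSum _ fun j _ =>
      ((hint i j).const_mul (x i)).mul_const (x j)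
  have hQ : star x ⬝ᵥ (of fun i j => ∫ u, F u i j ∂μ) *ᵥ x = ∫ u, Q u ∂μ := by
    simp only [Q, dotProduct_mulVec_eq_sum, star_trivial, of_apply]
    rw [integral_finsetSum _ fun i _ => integrable_finsetSum _ fun j _ =>
      ((hint i j).const_mul (x i)).mul_const (x j)]
    refine Finset.sum_congr rfl fun i _ => ?_
    rw [integral_finsetSum _ fun j _ => ((hint i j).const_mul (x i)).mul_const (x j)]
    simp only [integral_mul_const, integral_const_mul]
  have hQnonneg : 0 ≤ Q := fun u => (hpsd u).dotProduct_mulVec_nonneg x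
  rw [hQ, integral_pos_iff_support_of_nonneg hQnonneg hQint]
  obtain ⟨u, hu⟩ := hpos x hx
  have hQcont : Continuous Q := continuous_const.dotProduct (hF.matrix_mulVec continuous_const)
  exact hQcont.isOpen_support.measure_pos μ ⟨u, hu.ne'⟩

end Matrix

section GaussianKernel

variable {ι E : Type*} [NormedAddCommGroup E]

noncomputable def gaussianKernelMatrix (c : ℝ) (q : ι → E) : Matrix ι ι ℝ :=
  of fun i j => exp (-c * ‖q i - q j‖ ^ 2)

theorem posSemidef_gaussianKernelMatrix [Fintype ι] [InnerProductSpace ℝ E] {c : ℝ} (hc : 0 ≤ c)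
    (q : ι → E) :
    (gaussianKernelMatrix c q).PosSemidef := by
  set w : ι → ℝ := fun i => exp (-c * ‖q i‖ ^ 2)
  have hsplit :
      gaussianKernelMatrix c q = vecMulVec w (star w) ⊙ ((2 * c) • gram ℝ q).map exp := by
    ext i j
    simp only [gaussianKernelMatrix, of_apply, hadamard_apply, vecMulVec_apply, map_apply,
      Matrix.smul_apply, gram_apply, star_trivial, w, smul_eq_mul, ← exp_add, norm_sub_sq_real]
    ring_nf
  rw [hsplit]
  exact (posSemidef_vecMulVec_self_star w).hadamard
    (((posSemidef_gram ℝ q).smul (by positivity)).map_exp)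

theorem tendsto_gaussianKernelMatrix_atTop [DecidableEq ι] {q : ι → E}
    (hq : Function.Injective q) :
    Tendsto (gaussianKernelMatrix · q) atTop (𝓝 1) := by
  refine tendsto_pi_nhds.2 fun i => tendsto_pi_nhds.2 fun j => ?_
  by_cases hij : i = j
  · subst hij
    simp [gaussianKernelMatrix]
  · have hr : 0 < ‖q i - q j‖ ^ 2 := by
      have := sub_ne_zero.2 (hq.ne hij)
      positivity
    simpa [gaussianKernelMatrix, one_apply_ne hij, neg_mul] using
      tendsto_id.atTop_mul_const hr

theorem eventually_pos_dotProduct_gaussianKernelMatrix_mulVec [Fintype ι] [DecidableEq ι]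
    {q : ι → E} (hq : Function.Injective q) {x : ι → ℝ} (hx : x ≠ 0) :
    ∀ᶠ c in atTop, 0 < x ⬝ᵥ gaussianKernelMatrix c q *ᵥ x := by
  have hlim : Tendsto (fun c => x ⬝ᵥ gaussianKernelMatrix c q *ᵥ x) atTop
      (𝓝 (x ⬝ᵥ (1 : Matrix ι ι ℝ) *ᵥ x)) :=
    ((continuous_const.dotProduct (continuous_id.matrix_mulVec continuous_const)).tendsto _).comp
      (tendsto_gaussianKernelMatrix_atTop hq)
  rw [one_mulVec] at hlim
  exact hlim.eventually (eventually_gt_nhds (dotProduct_self_star_pos_iff.2 hx))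

end GaussianKernel

theorem rpow_neg_half_eq_integral_gaussian {a : ℝ} (ha : 0 < a) :
    a ^ (-(1 : ℝ) / 2) = (√π)⁻¹ * ∫ u : ℝ, exp (-a * u ^ 2) := by
  have hπ : √π ≠ 0 := by positivity
  have hsa : √a ≠ 0 := by positivity
  rw [integral_gaussian, sqrt_div pi_pos.le, neg_div, rpow_neg ha.le, ← sqrt_eq_rpow]
  field_simp

theorem inverse_multiquadric_gram_posDef_general (d N : ℕ) (ε : ℝ) (hε : 0 < ε)
    (q : Fin N → EuclideanSpace ℝ (Fin d)) (hq : Function.Injective q)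
    (A : Matrix (Fin N) (Fin N) ℝ)
    (hA : ∀ i j, A i j = (1 + ε ^ 2 * ‖q i - q j‖ ^ 2) ^ (-(1 : ℝ) / 2)) :
    A.IsSymm ∧ A.PosDef ∧ A.det ≠ 0 := by
  set F : ℝ → Matrix (Fin N) (Fin N) ℝ :=
    fun u => exp (-u ^ 2) • gaussianKernelMatrix (ε ^ 2 * u ^ 2) q
  have hF (u : ℝ) (i j : Fin N) : F u i j = exp (-(1 + ε ^ 2 * ‖q i - q j‖ ^ 2) * u ^ 2) := by
    simp only [F, gaussianKernelMatrix, Matrix.smul_apply, of_apply, smul_eq_mul, ← exp_add]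
    ring_nf
  have hAF : A = (√π)⁻¹ • of fun i j => ∫ u, F u i j := by
    ext i j
    simp only [hA, hF, Matrix.smul_apply, of_apply, smul_eq_mul]
    exact rpow_neg_half_eq_integral_gaussian (by positivity)
  have hFpos (x : Fin N → ℝ) (hx : x ≠ 0) : ∃ u, 0 < x ⬝ᵥ F u *ᵥ x := by
    have hc : Tendsto (fun u : ℝ => ε ^ 2 * u ^ 2) atTop atTop :=
      (tendsto_pow_atTop two_ne_zero).const_mul_atTop (by positivity)
    obtain ⟨u, hu⟩ :=
      (hc.eventually (eventually_pos_dotProduct_gaussianKernelMatrix_mulVec hq hx)).exists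
    exact ⟨u, by simpa [F, smul_mulVec, dotProduct_smul] using mul_pos (exp_pos (-u ^ 2)) hu⟩
  have hpd : A.PosDef := by
    rw [hAF]
    refine (posDef_integral ?_ (fun i j => ?_) (fun u => ?_) hFpos).smul (by positivity)
    · exact continuous_matrix fun i j => by simp only [hF]; fun_prop
    · simpa only [hF] using integrable_exp_neg_mul_sq (by positivity)
    · exact (posSemidef_gaussianKernelMatrix (by positivity) q).smul (exp_pos _).le
  exact ⟨isHermitian_iff_isSymm.1 hpd.isHermitian, hpd, hpd.det_pos.ne'⟩

/-- The Gram matrix of the inverse multiquadric RBF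
`φ(r) = (1 + ε²r²)^(-1/2)` at pairwise distinct nodes in `ℝ^d` is symmetric and
positive definite; in particular it is invertible (nonzero determinant). -/
theorem inverse_multiquadric_gram_posDef (d N : ℕ) (hd : 1 ≤ d) (ε : ℝ) (hε : 0 < ε)
    (q : Fin N → EuclideanSpace ℝ (Fin d)) (hq : Function.Injective q)
    (A : Matrix (Fin N) (Fin N) ℝ)
    (hA : ∀ i j, A i j = (1 + ε ^ 2 * ‖q i - q j‖ ^ 2) ^ (-(1 : ℝ) / 2)) :
    A.IsSymm ∧ A.PosDef ∧ A.det ≠ 0 :=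
  inverse_multiquadric_gram_posDef_general d N ε hε q hq A hA
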